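/- Let A = (a_1,…,a_p) ⊂ ℕ^n (also viewed as an n×p matrix) and b ∈ ℕ^n nonzero be such that some positive multiple of b lies in ⟨A⟩. Let d = d(A,b) be the smallest positive integer such that A·X = d·b has a solution X ∈ ℕ^p and s = s(A,b) the smallest positive integer such that A·X = s·b has a solution X ∈ ℤ^p, and assume d is squarefree. Then s divides d, so d = s·t for some positive integer t, and for all positive integers k_1, k_2 such that k_2 is a multiple of t, gcd(k_1,k_2) = 1 and gcd(k_1, gcd(b_1,…,b_n)) = 1, setting C = k_1A ∪ {k_2b}, the semigroup ⟨C⟩ is a gluing of ⟨A⟩ and ⟨b⟩. -/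

import Mathlib

open MvPolynomial

/-- The toric ideal `I_A ⊆ k[x_j : j ∈ σ]` of a family `A` of vectors in `ℕ^n`:
the kernel of the `k`-algebra map sending `x_j` to `t^{a_j} = ∏ i, t_i^{(a_j)_i}`. -/
noncomputable def toricIdeal (k : Type) [Field k] {σ : Type} {n : ℕ} (A : σ → Fin n → ℕ) :
    Ideal (MvPolynomial σ k) :=
  RingHom.ker (aeval (R := k) fun j => ∏ i, (X i : MvPolynomial (Fin n) k) ^ A j i)

/-- `⟨A ∪ {b}⟩` is a gluing of `⟨A⟩` and `⟨b⟩`: `I_C = I_A + ⟨y^d − x^α⟩`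
for some `d > 0` and `α ≠ 0`. -/
def IsGluingSingle (k : Type) [Field k] {n p : ℕ}
    (A : Fin p → Fin n → ℕ) (b : Fin n → ℕ) : Prop :=
  ∃ (d : ℕ) (α : Fin p → ℕ), 0 < d ∧ α ≠ 0 ∧
    toricIdeal k (Sum.elim A fun _ : Unit => b) =
      Ideal.map (rename Sum.inl) (toricIdeal k A) ⊔
      Ideal.span {(X (Sum.inr ()) ^ d : MvPolynomial (Fin p ⊕ Unit) k) -
        ∏ j, X (Sum.inl j) ^ α j}

/-- `⟨A⟩` and `⟨b⟩` can be glued. -/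
def CanBeGluedSingle (k : Type) [Field k] {n p : ℕ}
    (A : Fin p → Fin n → ℕ) (b : Fin n → ℕ) : Prop :=
  ∃ k1 k2 : ℕ, 0 < k1 ∧ 0 < k2 ∧
    IsGluingSingle k (fun j i => k1 * A j i) (fun i => k2 * b i)

/-!
The least positive `s` with `s • b ∈ ℤA` generates the group of all `m ∈ ℤ` with `m • b ∈ ℤA`;
this group contains `d`, so `s ∣ d`.

Gluing criterion: if `D • b' = A' α` with `α ∈ ℕ^p`, and `D` divides every `m ∈ ℤ` with
`m • b' ∈ ℤA'`, then `I_{A' ∪ {b'}} = I_{A'} + ⟨y^D - x^α⟩`. Indeed, division by this binomial,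
monic in `y`, leaves a remainder of `y`-degree `< D`. The images of its `y^c`-coefficients, shifted
by `t^{c b'}`, have pairwise disjoint supports, so each coefficient already lies in `I_{A'}`.

Apply this to `A' = k₁A`, `b' = k₂b`. By the coprimality hypotheses, `m • b' ∈ ℤA'` forces
`k₁ ∣ m` and then `s ∣ (m / k₁) k₂`, so `D = k₁ · (lcm(s, k₂) / k₂)` divides `m`. Moreover
`D • b' ∈ ℕA'` because `d ∣ lcm(s, k₂)`: `d = s t` is squarefree, so `s` and `t` are coprime,
and `t ∣ k₂`.
-/

section Toric

variable (R : Type*) [CommSemiring R] {σ : Type*} {n : ℕ}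

noncomputable def toricHom (A : σ → Fin n → ℕ) : MvPolynomial σ R →ₐ[R] MvPolynomial (Fin n) R :=
  aeval fun j => ∏ i, (X i : MvPolynomial (Fin n) R) ^ A j i

variable {R}

noncomputable def toricExp [Fintype σ] (A : σ → Fin n → ℕ) (u : σ →₀ ℕ) : Fin n →₀ ℕ :=
  Finsupp.equivFunOnFinite.symm fun i => ∑ j, u j * A j i

@[simp]
theorem toricExp_apply [Fintype σ] (A : σ → Fin n → ℕ) (u : σ →₀ ℕ) (i : Fin n) :
    toricExp A u i = ∑ j, u j * A j i :=
  rfl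

theorem prod_univ_X_pow_eq_monomial {τ : Type*} [Fintype τ] (g : τ → ℕ) :
    ∏ i, (X i : MvPolynomial τ R) ^ g i = monomial (Finsupp.equivFunOnFinite.symm g) 1 := by
  rw [monomial_eq, C_1, one_mul, Finsupp.prod_fintype _ _ fun i => pow_zero _]
  rfl

theorem toricHom_X (A : σ → Fin n → ℕ) (j : σ) :
    toricHom R A (X j) = monomial (Finsupp.equivFunOnFinite.symm (A j)) 1 := by
  rw [toricHom, aeval_X, prod_univ_X_pow_eq_monomial]

theorem toricHom_monomial [Fintype σ] (A : σ → Fin n → ℕ) (u : σ →₀ ℕ) (c : R) :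
    toricHom R A (monomial u c) = monomial (toricExp A u) c := by
  rw [monomial_eq, map_mul, Finsupp.prod_fintype _ _ fun j => pow_zero _, map_prod]
  have hexp : ∑ j, u j • Finsupp.equivFunOnFinite.symm (A j) = toricExp A u := by
    ext i
    simp [Finsupp.finsetSum_apply]
  simp only [map_pow, toricHom_X, monomial_pow, one_pow, ← monomial_sum_one, hexp, algHom_C,
    algebraMap_eq, C_mul_monomial, mul_one]

theorem exists_toricExp_eq_of_mem_support [Fintype σ] (A : σ → Fin n → ℕ)
    {g : MvPolynomial σ R} {ν : Fin n →₀ ℕ} (hν : ν ∈ (toricHom R A g).support) :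
    ∃ u, toricExp A u = ν := by
  classical
  rw [g.as_sum, map_sum] at hν
  obtain ⟨u, -, hu⟩ := Finset.mem_biUnion.mp (support_sum hν)
  rw [toricHom_monomial] at hu
  exact ⟨u, (Finset.mem_singleton.mp (support_monomial_subset hu)).symm⟩

end Toric

theorem MvPolynomial.eq_zero_of_sum_mul_monomial_eq_zero {R σ ι : Type*} [CommSemiring R]
    {s : Finset ι} (P : ι → MvPolynomial σ R) (κ : ι → σ →₀ ℕ)
    (hsep : ∀ c ∈ s, ∀ c' ∈ s, ∀ ν ∈ (P c).support, ∀ ν' ∈ (P c').support,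
      ν + κ c = ν' + κ c' → c = c')
    (h : ∑ c ∈ s, P c * monomial (κ c) 1 = 0) {c : ι} (hc : c ∈ s) : P c = 0 := by
  classical
  by_contra hne
  obtain ⟨ν, hν⟩ := Finset.nonempty_of_ne_empty (mt support_eq_empty.mp hne)
  have hcoeff := congrArg (coeff (ν + κ c)) h
  rw [coeff_sum, coeff_zero, Finset.sum_eq_single c, coeff_mul_monomial, mul_one] at hcoeff
  · exact mem_support_iff.mp hν hcoeff
  · intro c' hc' hne'
    rw [coeff_mul_monomial']
    split_ifs with hle
    · by_contra hne''
      exact hne' (hsep c' hc' c hc _ (mem_support_iff.mpr (by simpa using hne'')) ν hν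
        (tsub_add_cancel_of_le hle))
    · rfl
  · exact fun h' => absurd hc h'

section SumUnit

variable (R : Type*) [CommSemiring R] (σ : Type*)

noncomputable def sumUnitEquiv : MvPolynomial (σ ⊕ Unit) R ≃ₐ[R] Polynomial (MvPolynomial σ R) :=
  (renameEquiv R (Equiv.optionEquivSumPUnit σ).symm).trans (optionEquivLeft R σ)

variable {R σ}

@[simp]
theorem sumUnitEquiv_X_inr : sumUnitEquiv R σ (X (Sum.inr ())) = Polynomial.X := by
  simp [sumUnitEquiv, optionEquivLeft_X_none]

@[simp]
theorem sumUnitEquiv_X_inl (j : σ) : sumUnitEquiv R σ (X (Sum.inl j)) = Polynomial.C (X j) := by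
  simp [sumUnitEquiv, optionEquivLeft_X_some]

@[simp]
theorem sumUnitEquiv_rename_inl (g : MvPolynomial σ R) :
    sumUnitEquiv R σ (rename Sum.inl g) = Polynomial.C g := by
  induction g using MvPolynomial.induction_on with
  | C a => simp [sumUnitEquiv, optionEquivLeft_C]
  | add p q hp hq => simp only [map_add, hp, hq]
  | mul_X p j hp => simp only [map_mul, hp, rename_X, sumUnitEquiv_X_inl]

theorem sumUnitEquiv_symm_eq_sum (r : Polynomial (MvPolynomial σ R)) :
    (sumUnitEquiv R σ).symm r =
      ∑ c ∈ r.support, rename Sum.inl (r.coeff c) * X (Sum.inr ()) ^ c := by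
  apply (sumUnitEquiv R σ).injective
  conv_lhs => rw [AlgEquiv.apply_symm_apply, r.as_sum_support_C_mul_X_pow]
  simp

end SumUnit

def multiplierSubgroup {σ : Type*} [Fintype σ] {n : ℕ} (A : σ → Fin n → ℕ) (b : Fin n → ℕ) :
    AddSubgroup ℤ where
  carrier := {m | ∃ z : σ → ℤ, ∀ i, ∑ j, z j * (A j i : ℤ) = m * b i}
  zero_mem' := ⟨0, by simp⟩
  add_mem' := by
    rintro m m' ⟨z, hz⟩ ⟨z', hz'⟩
    exact ⟨z + z', fun i => by simp [add_mul, Finset.sum_add_distrib, hz, hz']⟩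
  neg_mem' := by
    rintro m ⟨z, hz⟩
    exact ⟨-z, fun i => by simp [neg_mul, hz]⟩

theorem AddSubgroup.natCast_sInf_dvd_of_mem (H : AddSubgroup ℤ) {m : ℤ} (hm : m ∈ H) :
    ((sInf {s : ℕ | 0 < s ∧ (s : ℤ) ∈ H} : ℕ) : ℤ) ∣ m := by
  rcases eq_or_ne m 0 with rfl | hm0
  · exact dvd_zero _
  have habs : (m.natAbs : ℤ) ∈ H := by
    rw [Int.natCast_natAbs]
    rcases abs_choice m with h | h <;> rw [h]
    exacts [hm, H.neg_mem hm]
  obtain ⟨hs, hsH⟩ := Nat.sInf_mem (⟨m.natAbs, Int.natAbs_pos.mpr hm0, habs⟩ :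
    {s : ℕ | 0 < s ∧ (s : ℤ) ∈ H}.Nonempty)
  set s := sInf {s : ℕ | 0 < s ∧ (s : ℤ) ∈ H}
  have hmod : m % s ∈ H := by
    rw [Int.emod_def]
    exact H.sub_mem hm (by simpa [mul_comm] using H.zsmul_mem hsH (m / s))
  have hmod_nonneg := Int.emod_nonneg m (b := s) (by omega)
  have hmod_lt := Int.emod_lt_of_pos m (b := s) (by omega)
  refine Int.dvd_of_emod_eq_zero (by_contra fun hne => ?_)
  have hle := Nat.sInf_le (show (m % s).toNat ∈ {s : ℕ | 0 < s ∧ (s : ℤ) ∈ H} from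
    ⟨by omega, by rwa [Int.toNat_of_nonneg hmod_nonneg]⟩)
  omega

section Scaling

variable {σ : Type*} [Fintype σ] {n : ℕ} {A : σ → Fin n → ℕ} {b : Fin n → ℕ} {k1 k2 : ℕ}

theorem exists_eq_mul_of_mem_multiplierSubgroup_mul (hk1 : 0 < k1) (hcop : k1.Coprime k2)
    (hcopb : k1.Coprime (Finset.univ.gcd b)) {m : ℤ}
    (hm : m ∈ multiplierSubgroup (fun j i => k1 * A j i) fun i => k2 * b i) :
    ∃ m₁, m = k1 * m₁ ∧ m₁ * k2 ∈ multiplierSubgroup A b := by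
  obtain ⟨z, hz⟩ := hm
  have hdvd : ∀ i, k1 ∣ m.natAbs * k2 * b i := fun i => by
    have : (k1 : ℤ) ∣ m * k2 * b i := ⟨∑ j, z j * A j i, by
      rw [Finset.mul_sum, mul_assoc, ← Nat.cast_mul, ← hz i]
      exact Finset.sum_congr rfl fun j _ => by push_cast; ring⟩
    simpa [Int.natAbs_mul] using Int.natCast_dvd.mp this
  have hgcd : k1 ∣ m.natAbs * (k2 * Finset.univ.gcd b) := by
    rw [← mul_assoc, ← normalize_eq (m.natAbs * k2), ← Finset.gcd_mul_left]
    exact Finset.dvd_gcd fun i _ => hdvd i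
  obtain ⟨m₁, rfl⟩ := Int.natCast_dvd.mpr ((hcop.mul_right hcopb).dvd_of_dvd_mul_right hgcd)
  refine ⟨m₁, rfl, z, fun i => mul_left_cancel₀ (Int.natCast_ne_zero.mpr hk1.ne') ?_⟩
  rw [Finset.mul_sum, ← mul_assoc]
  convert hz i using 1
  · exact Finset.sum_congr rfl fun j _ => by push_cast; ring
  · push_cast; ring

theorem natCast_mul_dvd_of_mem_multiplierSubgroup_mul (hk1 : 0 < k1) (hk2 : 0 < k2)
    (hcop : k1.Coprime k2) (hcopb : k1.Coprime (Finset.univ.gcd b)) {s e : ℕ}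
    (hs : ∀ m ∈ multiplierSubgroup A b, (s : ℤ) ∣ m) (he : s.lcm k2 = k2 * e) :
    ∀ m ∈ multiplierSubgroup (fun j i => k1 * A j i) (fun i => k2 * b i),
      ((k1 * e : ℕ) : ℤ) ∣ m := by
  intro m hm
  obtain ⟨m₁, rfl, hm₁⟩ := exists_eq_mul_of_mem_multiplierSubgroup_mul hk1 hcop hcopb hm
  have hlcm : ((k2 * e : ℕ) : ℤ) ∣ k2 * m₁ := by
    rw [← he, mul_comm]
    exact Int.natCast_dvd.mpr (Nat.lcm_dvd (Int.natCast_dvd.mp (hs _ hm₁))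
      (by simp [Int.natAbs_mul]))
  rw [Nat.cast_mul] at hlcm ⊢
  exact mul_dvd_mul_left _ ((mul_dvd_mul_iff_left (by positivity)).mp hlcm)

end Scaling

theorem Nat.dvd_lcm_of_squarefree {s d k : ℕ} (hd : Squarefree d) (hsd : s ∣ d) (hk : d / s ∣ k) :
    d ∣ s.lcm k := by
  obtain ⟨t, rfl⟩ := hsd
  rcases eq_or_ne s 0 with rfl | hs
  · simp at hd
  rw [Nat.mul_div_cancel_left t (Nat.pos_of_ne_zero hs)] at hk
  exact (Nat.coprime_of_squarefree_mul hd).mul_dvd_of_dvd_of_dvd (Nat.dvd_lcm_left s k)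
    (hk.trans (Nat.dvd_lcm_right s k))

theorem mem_toricIdeal {k : Type} [Field k] {σ : Type} {n : ℕ} {A : σ → Fin n → ℕ}
    {f : MvPolynomial σ k} : f ∈ toricIdeal k A ↔ toricHom k A f = 0 :=
  Iff.rfl

section Gluing

variable {k : Type} [Field k] {σ : Type} {n : ℕ} (A : σ → Fin n → ℕ) (b : Fin n → ℕ)

theorem toricHom_sumElim_rename_inl (g : MvPolynomial σ k) :
    toricHom k (Sum.elim A fun _ : Unit => b) (rename Sum.inl g) = toricHom k A g := by
  rw [toricHom, aeval_rename]
  rfl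

theorem map_rename_inl_toricIdeal_le :
    Ideal.map (rename Sum.inl) (toricIdeal k A) ≤ toricIdeal k (Sum.elim A fun _ : Unit => b) :=
  Ideal.map_le_iff_le_comap.mpr fun g hg => by
    rw [Ideal.mem_comap, mem_toricIdeal, toricHom_sumElim_rename_inl]
    exact hg

variable [Fintype σ]

theorem X_inr_pow_sub_mem_toricIdeal {D : ℕ} {α : σ → ℕ}
    (hα : ∀ i, ∑ j, α j * A j i = D * b i) :
    X (Sum.inr ()) ^ D - ∏ j, X (Sum.inl j) ^ α j ∈
      toricIdeal k (Sum.elim A fun _ : Unit => b) := by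
  have hprod : ∏ j, (X (Sum.inl j) : MvPolynomial (σ ⊕ Unit) k) ^ α j =
      rename Sum.inl (monomial (Finsupp.equivFunOnFinite.symm α) 1) := by
    simp [← prod_univ_X_pow_eq_monomial, map_prod]
  have hexp :
      toricExp A (Finsupp.equivFunOnFinite.symm α) = D • Finsupp.equivFunOnFinite.symm b := by
    ext i
    simp [hα]
  rw [mem_toricIdeal, map_sub, hprod, toricHom_sumElim_rename_inl, toricHom_monomial, map_pow,
    toricHom_X, Sum.elim_inr, monomial_pow, one_pow, hexp, sub_self]

variable {A b}

theorem eq_of_toricExp_add_nsmul_eq {D : ℕ} (hsep : ∀ m ∈ multiplierSubgroup A b, (D : ℤ) ∣ m)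
    {u u' : σ →₀ ℕ} {c c' : ℕ} (hc : c < D) (hc' : c' < D)
    (h : toricExp A u + c • Finsupp.equivFunOnFinite.symm b =
      toricExp A u' + c' • Finsupp.equivFunOnFinite.symm b) : c = c' := by
  have hmem : (c' : ℤ) - c ∈ multiplierSubgroup A b := ⟨fun j => (u j : ℤ) - u' j, fun i => by
    have hi : ∑ j, u j * A j i + c * b i = ∑ j, u' j * A j i + c' * b i := by
      simpa using DFunLike.congr_fun h i
    zify at hi
    simp only [sub_mul, Finset.sum_sub_distrib]
    linear_combination hi⟩
  exact (Nat.modEq_iff_dvd.mpr (hsep _ hmem)).eq_of_lt_of_lt hc hc'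

theorem sumUnitEquiv_symm_mem_map_of_degree_lt {D : ℕ}
    (hsep : ∀ m ∈ multiplierSubgroup A b, (D : ℤ) ∣ m)
    {r : Polynomial (MvPolynomial σ k)} (hr : r.degree < D)
    (h : (sumUnitEquiv k σ).symm r ∈ toricIdeal k (Sum.elim A fun _ : Unit => b)) :
    (sumUnitEquiv k σ).symm r ∈ Ideal.map (rename Sum.inl) (toricIdeal k A) := by
  have hlt : ∀ c ∈ r.support, c < D := fun c hc => by
    exact_mod_cast (Polynomial.le_degree_of_mem_supp c hc).trans_lt hr
  rw [sumUnitEquiv_symm_eq_sum] at h ⊢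
  refine Ideal.sum_mem _ fun c hc => Ideal.mul_mem_right _ _ (Ideal.mem_map_of_mem _ ?_)
  rw [mem_toricIdeal, map_sum] at h
  simp only [map_mul, map_pow, toricHom_sumElim_rename_inl, toricHom_X, Sum.elim_inr,
    monomial_pow, one_pow] at h
  refine eq_zero_of_sum_mul_monomial_eq_zero _ _ (fun c hc c' hc' ν hν ν' hν' hsum => ?_) h hc
  obtain ⟨u, rfl⟩ := exists_toricExp_eq_of_mem_support A hν
  obtain ⟨u', rfl⟩ := exists_toricExp_eq_of_mem_support A hν'
  exact eq_of_toricExp_add_nsmul_eq hsep (hlt c hc) (hlt c' hc') hsum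

theorem toricIdeal_sumElim_eq_sup_span {D : ℕ} (hD : 0 < D) {α : σ → ℕ}
    (hα : ∀ i, ∑ j, α j * A j i = D * b i) (hsep : ∀ m ∈ multiplierSubgroup A b, (D : ℤ) ∣ m) :
    toricIdeal k (Sum.elim A fun _ : Unit => b) =
      Ideal.map (rename Sum.inl) (toricIdeal k A) ⊔
      Ideal.span {X (Sum.inr ()) ^ D - ∏ j, X (Sum.inl j) ^ α j} := by
  set ρ : MvPolynomial (σ ⊕ Unit) k := X (Sum.inr ()) ^ D - ∏ j, X (Sum.inl j) ^ α j
  have hρ : ρ ∈ toricIdeal k (Sum.elim A fun _ : Unit => b) := X_inr_pow_sub_mem_toricIdeal A b hα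
  refine le_antisymm (fun f hf => ?_) (sup_le (map_rename_inl_toricIdeal_le A b)
    (Ideal.span_le.mpr (Set.singleton_subset_iff.mpr hρ)))
  set E := sumUnitEquiv k σ
  have hEρ : E ρ = Polynomial.X ^ D - Polynomial.C (∏ j, X j ^ α j) := by
    simp [ρ, E, map_prod]
  have hmonic : (E ρ).Monic := hEρ ▸ Polynomial.monic_X_pow_sub_C _ hD.ne'
  have hdiv : f = E.symm (E f %ₘ E ρ) + ρ * E.symm (E f /ₘ E ρ) := by
    apply E.injective
    rw [map_add, map_mul, E.apply_symm_apply, E.apply_symm_apply, Polynomial.modByMonic_add_div]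
  have hdeg : (E f %ₘ E ρ).degree < D := by
    have hdegρ : (E ρ).degree = D := by rw [hEρ, Polynomial.degree_X_pow_sub_C hD]
    exact hdegρ ▸ Polynomial.degree_modByMonic_lt _ hmonic
  have hmul : ρ * E.symm (E f /ₘ E ρ) ∈ Ideal.span {ρ} :=
    Ideal.mul_mem_right _ _ (Ideal.subset_span rfl)
  have hrem : E.symm (E f %ₘ E ρ) ∈ toricIdeal k (Sum.elim A fun _ : Unit => b) := by
    rw [eq_sub_of_add_eq hdiv.symm]
    exact Ideal.sub_mem _ hf (Ideal.mul_mem_right _ _ hρ)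
  rw [hdiv]
  exact Ideal.add_mem _ (Ideal.mem_sup_left (sumUnitEquiv_symm_mem_map_of_degree_lt hsep hdeg hrem))
    (Ideal.mem_sup_right hmul)

end Gluing

theorem isGluingSingle_mul_of_dvd_lcm (k : Type) [Field k] {n p : ℕ} {A : Fin p → Fin n → ℕ}
    {b : Fin n → ℕ} (hb : b ≠ 0) {k1 k2 : ℕ} (hk1 : 0 < k1) (hk2 : 0 < k2)
    (hcop : k1.Coprime k2) (hcopb : k1.Coprime (Finset.univ.gcd b)) {s d : ℕ} (hs0 : s ≠ 0)
    (hs : ∀ m ∈ multiplierSubgroup A b, (s : ℤ) ∣ m) (hd : 0 < d) {Xd : Fin p → ℕ}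
    (hXd : ∀ i, ∑ j, Xd j * A j i = d * b i) (hdl : d ∣ s.lcm k2) :
    IsGluingSingle k (fun j i => k1 * A j i) (fun i => k2 * b i) := by
  obtain ⟨e, he⟩ := Nat.dvd_lcm_right s k2
  obtain ⟨w, hw⟩ := hdl
  have hlcm : s.lcm k2 ≠ 0 := Nat.lcm_ne_zero hs0 hk2.ne'
  have hD : 0 < k1 * e := Nat.mul_pos hk1 (Nat.pos_of_ne_zero (by rintro rfl; simp_all))
  have hXd0 : Xd ≠ 0 := by
    rintro rfl
    obtain ⟨i, hi⟩ := Function.ne_iff.mp hb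
    exact hi (by simpa [hd.ne'] using (hXd i).symm)
  refine ⟨k1 * e, fun j => w * Xd j, hD, fun hα => hXd0 ?_,
    toricIdeal_sumElim_eq_sup_span hD (fun i => ?_)
      (natCast_mul_dvd_of_mem_multiplierSubgroup_mul hk1 hk2 hcop hcopb hs he)⟩
  · have hw0 : w ≠ 0 := by rintro rfl; simp_all
    exact funext fun j => (mul_eq_zero.mp (congrFun hα j)).resolve_left hw0
  · calc ∑ j, w * Xd j * (k1 * A j i) = k1 * w * ∑ j, Xd j * A j i := by
          rw [Finset.mul_sum]
          exact Finset.sum_congr rfl fun j _ => by ring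
      _ = k1 * (d * w) * b i := by rw [hXd i]; ring
      _ = k1 * e * (k2 * b i) := by rw [← hw, he]; ring

/-- Squarefree case: with `d = d(A,b)` (smallest `d > 0` with `A·X = d·b` solvable over `ℕ`)
and `s = s(A,b)` (smallest `s > 0` with `A·X = s·b` solvable over `ℤ`), if `d` is squarefree
then `s ∣ d`, say `d = s·t`, and for all positive `k₁, k₂` with `t ∣ k₂`, `gcd(k₁,k₂) = 1`
and `gcd(k₁, gcd(b₁,…,b_n)) = 1`, the semigroup `⟨k₁A ∪ {k₂b}⟩` is a gluing of `⟨A⟩`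
and `⟨b⟩`. -/
theorem squarefree_glue (k : Type) [Field k] {n p : ℕ}
    (A : Fin p → Fin n → ℕ) (b : Fin n → ℕ) (hb : b ≠ 0)
    (hmult : ∃ d : ℕ, 0 < d ∧ ∃ Xv : Fin p → ℕ, ∀ i, ∑ j, Xv j * A j i = d * b i)
    (hsq : Squarefree
      (sInf {d : ℕ | 0 < d ∧ ∃ Xv : Fin p → ℕ, ∀ i, ∑ j, Xv j * A j i = d * b i})) :
    sInf {s : ℕ | 0 < s ∧ ∃ Xv : Fin p → ℤ, ∀ i, ∑ j, Xv j * (A j i : ℤ) = (s : ℤ) * b i} ∣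
      sInf {d : ℕ | 0 < d ∧ ∃ Xv : Fin p → ℕ, ∀ i, ∑ j, Xv j * A j i = d * b i} ∧
    ∀ k1 k2 : ℕ, 0 < k1 → 0 < k2 →
      (sInf {d : ℕ | 0 < d ∧ ∃ Xv : Fin p → ℕ, ∀ i, ∑ j, Xv j * A j i = d * b i} /
        sInf {s : ℕ | 0 < s ∧
          ∃ Xv : Fin p → ℤ, ∀ i, ∑ j, Xv j * (A j i : ℤ) = (s : ℤ) * b i}) ∣ k2 →
      Nat.Coprime k1 k2 → Nat.Coprime k1 (Finset.univ.gcd b) →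
      IsGluingSingle k (fun j i => k1 * A j i) (fun i => k2 * b i) := by
  set d := sInf {d : ℕ | 0 < d ∧ ∃ Xv : Fin p → ℕ, ∀ i, ∑ j, Xv j * A j i = d * b i}
  set s := sInf {s : ℕ | 0 < s ∧ ∃ Xv : Fin p → ℤ, ∀ i, ∑ j, Xv j * (A j i : ℤ) = (s : ℤ) * b i}
  obtain ⟨hd, Xd, hXd⟩ : d ∈ {d : ℕ | 0 < d ∧ ∃ Xv : Fin p → ℕ, ∀ i, ∑ j, Xv j * A j i = d * b i} :=
    Nat.sInf_mem hmult
  have hs : ∀ m ∈ multiplierSubgroup A b, (s : ℤ) ∣ m := fun m hm =>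
    (multiplierSubgroup A b).natCast_sInf_dvd_of_mem hm
  have hsd : s ∣ d :=
    Int.natCast_dvd_natCast.mp <| hs d ⟨fun j => Xd j, fun i => by push_cast; exact_mod_cast hXd i⟩
  exact ⟨hsd, fun k1 k2 hk1 hk2 ht hcop hcopb =>
    isGluingSingle_mul_of_dvd_lcm k hb hk1 hk2 hcop hcopb (ne_zero_of_dvd_ne_zero hd.ne' hsd) hs hd
      hXd (Nat.dvd_lcm_of_squarefree hsq hsd ht)⟩
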